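/- Monotonicity of the controlled dynamics (Theorem 1, monotonicity part): for any revision sequence (R(t)) and any control sets C^X, C^Y ⊆ V, the controlled trajectory satisfies x_i(t+1) ≥ x_i(t) and y_i(t+1) ≥ y_i(t) for all i ∈ V and all t ≥ 0. -/
import Mathlib


/-- The quantity `δ_i(z)` determining the best-response action. -/
noncomputable def delta (n : ℕ) (A W : Fin n → Fin n → ℝ) (l b : Fin n → ℝ)
    (i : Fin n) (x y : Fin n → ℝ) : ℝ :=
  2 * b i * (1 - l i) * ∑ j, W i j * y j + (1 - b i) * ∑ j, A i j * x j

/-- Assumption 1 on the revision sequence: there is `T < ∞` such that every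
agent activates at least once in every window of `T` consecutive time steps. -/
def RevOK (n : ℕ) (R : ℕ → Finset (Fin n)) : Prop :=
  ∃ T : ℕ, ∀ t : ℕ, ∀ i : Fin n, ∃ s, s < T ∧ i ∈ R (t + s)

/-- The controlled coevolutionary trajectory with control sets `CX, CY`:
controlled coordinates are pinned to `+1` for all `t ≥ 0`, uncontrolled ones
start at `-1` and follow the best-response dynamics when activated. -/
def IsCtrlTraj (n : ℕ) (A W : Fin n → Fin n → ℝ) (l b : Fin n → ℝ)
    (R : ℕ → Finset (Fin n)) (CX CY : Finset (Fin n))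
    (x y : ℕ → Fin n → ℝ) : Prop :=
  (∀ i ∈ CX, ∀ t, x t i = 1) ∧
  (∀ i ∈ CY, ∀ t, y t i = 1) ∧
  (∀ i, i ∉ CX → x 0 i = -1) ∧
  (∀ i, i ∉ CY → y 0 i = -1) ∧
  (∀ t, ∀ i, i ∉ CX →
    x (t + 1) i =
      if i ∈ R t then
        if 0 < delta n A W l b i (x t) (y t) then 1
        else if delta n A W l b i (x t) (y t) < 0 then -1
        else x t i
      else x t i) ∧
  (∀ t, ∀ i, i ∉ CY →
    y (t + 1) i =
      if i ∈ R t then (1 - l i) * (∑ j, W i j * y t j) + l i * x (t + 1) i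
      else y t i)

/-- The trajectory reaches the `+1` consensus (actions) in finite time. -/
def Reaches (n : ℕ) (x : ℕ → Fin n → ℝ) : Prop :=
  ∃ T : ℕ, ∀ t, T ≤ t → ∀ i, x t i = 1

section Aux

private lemma sum_mul_mono {n : ℕ} (w u v : Fin n → ℝ) (hw : ∀ j, 0 ≤ w j)
    (h : ∀ j, u j ≤ v j) : ∑ j, w j * u j ≤ ∑ j, w j * v j :=
  Finset.sum_le_sum fun j _ => mul_le_mul_of_nonneg_left (h j) (hw j)

private lemma sum_mul_bounds {n : ℕ} (w u : Fin n → ℝ) (hw : ∀ j, 0 ≤ w j)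
    (hrow : ∑ j, w j = 1) (hu : ∀ j, -1 ≤ u j ∧ u j ≤ 1) :
    -1 ≤ ∑ j, w j * u j ∧ ∑ j, w j * u j ≤ 1 := by
  constructor
  · calc (-1 : ℝ) = ∑ j, w j * (-1) := by
          rw [← Finset.sum_mul, hrow, one_mul]
        _ ≤ ∑ j, w j * u j :=
          Finset.sum_le_sum fun j _ => mul_le_mul_of_nonneg_left (hu j).1 (hw j)
  · calc ∑ j, w j * u j ≤ ∑ j, w j * 1 :=
          Finset.sum_le_sum fun j _ => mul_le_mul_of_nonneg_left (hu j).2 (hw j)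
        _ = 1 := by rw [← Finset.sum_mul, hrow, one_mul]

private lemma delta_mono {n : ℕ} (A W : Fin n → Fin n → ℝ) (l b : Fin n → ℝ)
    (hA0 : ∀ i j, 0 ≤ A i j) (hW0 : ∀ i j, 0 ≤ W i j)
    (hl : ∀ i, 0 < l i ∧ l i ≤ 1) (hb : ∀ i, 0 < b i ∧ b i ≤ 1)
    (i : Fin n) (x x' y y' : Fin n → ℝ) (hx : ∀ j, x j ≤ x' j) (hy : ∀ j, y j ≤ y' j) :
    delta n A W l b i x y ≤ delta n A W l b i x' y' := by
  unfold delta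
  have h1 : (0:ℝ) ≤ 2 * b i * (1 - l i) := by
    have := (hl i).2; have := (hb i).1; nlinarith
  have h2 : (0:ℝ) ≤ 1 - b i := by have := (hb i).2; linarith
  have hs1 := sum_mul_mono (W i) y y' (hW0 i) hy
  have hs2 := sum_mul_mono (A i) x x' (hA0 i) hx
  nlinarith [mul_le_mul_of_nonneg_left hs1 h1, mul_le_mul_of_nonneg_left hs2 h2]

end Aux

/-- Theorem 1, monotonicity part. -/
theorem controlled_dynamics_monotone
    (n : ℕ) (A W : Fin n → Fin n → ℝ) (l b : Fin n → ℝ)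
    (hA0 : ∀ i j, 0 ≤ A i j) (hA1 : ∀ i j, A i j ≤ 1) (hArow : ∀ i, ∑ j, A i j = 1)
    (hW0 : ∀ i j, 0 ≤ W i j) (hW1 : ∀ i j, W i j ≤ 1) (hWrow : ∀ i, ∑ j, W i j = 1)
    (hl : ∀ i, 0 < l i ∧ l i ≤ 1) (hb : ∀ i, 0 < b i ∧ b i ≤ 1)
    (R : ℕ → Finset (Fin n)) (CX CY : Finset (Fin n))
    (x y : ℕ → Fin n → ℝ)
    (htraj : IsCtrlTraj n A W l b R CX CY x y) :
    ∀ t : ℕ, ∀ i : Fin n, x t i ≤ x (t + 1) i ∧ y t i ≤ y (t + 1) i := by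
  obtain ⟨hCX, hCY, hx0, hy0, hxup, hyup⟩ := htraj
  -- invariant
  set d := delta n A W l b with hd
  let S : ℕ → Prop := fun t =>
    (∀ i, x t i = 1 ∨ x t i = -1) ∧
    (∀ i, -1 ≤ y t i ∧ y t i ≤ 1) ∧
    (∀ i, i ∉ CX → x t i = 1 → 0 ≤ d i (x t) (y t)) ∧
    (∀ i, i ∉ CY → y t i ≤ (1 - l i) * ∑ j, W i j * y t j + l i * x t i)
  -- step lemma
  have key : ∀ t, S t →
      ((∀ i, x t i ≤ x (t+1) i ∧ y t i ≤ y (t+1) i) ∧ S (t+1)) := by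
    intro t hS
    obtain ⟨hxv, hyb, hQ, hP⟩ := hS
    have hx2 : ∀ i, -1 ≤ x t i ∧ x t i ≤ 1 := by
      intro i; rcases hxv i with h | h <;> rw [h] <;> norm_num
    -- monotonicity of x
    have Mx : ∀ i, x t i ≤ x (t+1) i := by
      intro i
      by_cases hcx : i ∈ CX
      · rw [hCX i hcx (t+1), hCX i hcx t]
      · rw [hxup t i hcx]
        split_ifs with hR h1 h2
        · exact (hx2 i).2
        · rcases hxv i with h | h
          · exact absurd (hQ i hcx h) (by linarith)
          · rw [h]
        · exact le_rfl
        · exact le_rfl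
    -- x is two-valued at t+1
    have hxv' : ∀ i, x (t+1) i = 1 ∨ x (t+1) i = -1 := by
      intro i
      by_cases hcx : i ∈ CX
      · exact Or.inl (hCX i hcx (t+1))
      · rw [hxup t i hcx]
        split_ifs with hR h1 h2
        · exact Or.inl rfl
        · exact Or.inr rfl
        · exact hxv i
        · exact hxv i
    have hx2' : ∀ i, -1 ≤ x (t+1) i ∧ x (t+1) i ≤ 1 := by
      intro i; rcases hxv' i with h | h <;> rw [h] <;> norm_num
    -- monotonicity of y
    have My : ∀ i, y t i ≤ y (t+1) i := by
      intro i
      by_cases hcy : i ∈ CY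
      · rw [hCY i hcy (t+1), hCY i hcy t]
      · rw [hyup t i hcy]
        split_ifs with hR
        · have h1 := hP i hcy
          have h2 : l i * x t i ≤ l i * x (t+1) i :=
            mul_le_mul_of_nonneg_left (Mx i) (le_of_lt (hl i).1)
          linarith
        · exact le_rfl
    -- y bounds at t+1
    have hyb' : ∀ i, -1 ≤ y (t+1) i ∧ y (t+1) i ≤ 1 := by
      intro i
      by_cases hcy : i ∈ CY
      · rw [hCY i hcy (t+1)]; norm_num
      · rw [hyup t i hcy]
        split_ifs with hR
        · have hs := sum_mul_bounds (W i) (y t) (hW0 i) (hWrow i) hyb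
          have hxb := hx2' i
          have hl1 := (hl i).1
          have hl2 := (hl i).2
          constructor <;> nlinarith
        · exact hyb i
    have hdmono : ∀ i, d i (x t) (y t) ≤ d i (x (t+1)) (y (t+1)) := by
      intro i
      exact delta_mono A W l b hA0 hW0 hl hb i _ _ _ _ Mx My
    -- Q at t+1
    have hQ' : ∀ i, i ∉ CX → x (t+1) i = 1 → 0 ≤ d i (x (t+1)) (y (t+1)) := by
      intro i hcx hx1
      refine le_trans ?_ (hdmono i)
      rw [hxup t i hcx] at hx1
      split_ifs at hx1 with hR h1 h2
      · linarith
      · norm_num at hx1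
      · linarith
      · exact hQ i hcx hx1
    -- P at t+1
    have hP' : ∀ i, i ∉ CY →
        y (t+1) i ≤ (1 - l i) * ∑ j, W i j * y (t+1) j + l i * x (t+1) i := by
      intro i hcy
      have hs : ∑ j, W i j * y t j ≤ ∑ j, W i j * y (t+1) j :=
        sum_mul_mono (W i) _ _ (hW0 i) My
      have h1l : (0:ℝ) ≤ 1 - l i := by have := (hl i).2; linarith
      have hss : (1 - l i) * ∑ j, W i j * y t j ≤ (1 - l i) * ∑ j, W i j * y (t+1) j :=
        mul_le_mul_of_nonneg_left hs h1l
      rw [hyup t i hcy]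
      split_ifs with hR
      · linarith
      · have h1 := hP i hcy
        have h2 : l i * x t i ≤ l i * x (t+1) i :=
          mul_le_mul_of_nonneg_left (Mx i) (le_of_lt (hl i).1)
        linarith
    exact ⟨fun i => ⟨Mx i, My i⟩, hxv', hyb', hQ', hP'⟩
  -- base case
  have base : S 0 := by
    have hxv0 : ∀ i, x 0 i = 1 ∨ x 0 i = -1 := by
      intro i
      by_cases hcx : i ∈ CX
      · exact Or.inl (hCX i hcx 0)
      · exact Or.inr (hx0 i hcx)
    have hyb0 : ∀ i, -1 ≤ y 0 i ∧ y 0 i ≤ 1 := by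
      intro i
      by_cases hcy : i ∈ CY
      · rw [hCY i hcy 0]; norm_num
      · rw [hy0 i hcy]; norm_num
    refine ⟨hxv0, hyb0, ?_, ?_⟩
    · intro i hcx hx1
      rw [hx0 i hcx] at hx1; norm_num at hx1
    · intro i hcy
      have hs := (sum_mul_bounds (W i) (y 0) (hW0 i) (hWrow i) hyb0).1
      have hxb : -1 ≤ x 0 i := by
        rcases hxv0 i with h | h <;> rw [h] <;> norm_num
      have hl1 := (hl i).1
      have hl2 := (hl i).2
      rw [hy0 i hcy]
      nlinarith
  have allS : ∀ t, S t := by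
    intro t
    induction t with
    | zero => exact base
    | succ t ih => exact (key t ih).2
  exact fun t => (key t (allS t)).1
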